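/- arXiv:1607.06751 — 4 statements merged into one kernel-verified Lean document; each statement's English description precedes it below -/
import Mathlib

section
/- Let T be a tree rooted at r, v a non-root vertex with children v₁,...,v_k, T_v the subtree rooted at v together with the edge from v to its parent, and S_v the star of v (v with all its incident edges). Then every traversal of a path set 𝒫 within T_v is within S_v or within some T_{vᵢ}, and co_χ(𝒫, T_v) = co_χ(𝒫, S_v) + Σᵢ co_χ(𝒫, T_{vᵢ}). -/
/-!
Identify each non-root vertex with its parent edge. If both ends of a traversal lie below `v`,
either both are within one step of `v` (the star `S_v`), or one end has depth at least two
below `v`; its ancestor `w` one level below `v` is then, by adjacency, also an ancestor of the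
other end. The pieces are disjoint because the root is the only periodic point of `parent`:
hence distinct children of `v` have disjoint subtrees, and an edge of `S_v` inside `T_w` is `w`
itself, which cannot hold for both (distinct) ends of a traversal.
-/

open scoped Classical

open Function Finset

theorem List.IsChain.rel_of_mem_zip_tail {α : Type*} {R : α → α → Prop} {l : List α}
    (h : l.IsChain R) {a b : α} (hab : (a, b) ∈ l.zip l.tail) : R a b := by
  induction l using List.twoStepInduction with
  | nil | singleton => simp at hab
  | cons_cons x y l _ ih =>
    rw [List.isChain_cons_cons] at h
    simp only [List.tail_cons, List.zip_cons_cons, List.mem_cons, Prod.mk.injEq] at hab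
    rcases hab with ⟨rfl, rfl⟩ | hab
    · exact h.1
    · exact ih y h.2 hab

theorem Finset.sum_filter_eq_add_sum_filter_of_cover {α ι M : Type*} [AddCommMonoid M]
    [DecidableEq α] (s : Finset α) (W : Finset ι) (p q : α → Prop) (pw : ι → α → Prop)
    [DecidablePred p] [DecidablePred q] [∀ i, DecidablePred (pw i)]
    (hcover : ∀ x ∈ s, p x ↔ q x ∨ ∃ i ∈ W, pw i x)
    (hq : ∀ x ∈ s, ∀ i ∈ W, q x → ¬ pw i x)
    (hpw : ∀ x ∈ s, ∀ i ∈ W, ∀ j ∈ W, pw i x → pw j x → i = j) (f : α → M) :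
    ∑ x ∈ s.filter p, f x =
      ∑ x ∈ s.filter q, f x + ∑ i ∈ W, ∑ x ∈ s.filter (pw i), f x := by
  have hdisj : Disjoint (s.filter q) (W.biUnion fun i => s.filter (pw i)) := by
    simp only [disjoint_left, mem_filter, mem_biUnion]
    rintro x ⟨hx, hqx⟩ ⟨i, hi, -, hpx⟩
    exact hq x hx i hi hqx hpx
  have hpair : (W : Set ι).PairwiseDisjoint fun i => s.filter (pw i) := by
    intro i hi j hj hij
    simp only [onFun, disjoint_left, mem_filter]
    rintro x ⟨hx, hpi⟩ ⟨-, hpj⟩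
    exact hij (hpw x hx i hi j hj hpi hpj)
  rw [← sum_biUnion hpair, ← sum_union hdisj]
  congr 1
  ext x
  simp only [mem_filter, mem_union, mem_biUnion]
  constructor
  · rintro ⟨hx, hpx⟩
    rcases (hcover x hx).1 hpx with hqx | ⟨i, hi, hpi⟩
    exacts [.inl ⟨hx, hqx⟩, .inr ⟨i, hi, hx, hpi⟩]
  · rintro (⟨hx, hqx⟩ | ⟨i, hi, hx, hpi⟩)
    exacts [⟨hx, (hcover x hx).2 (.inl hqx)⟩, ⟨hx, (hcover x hx).2 (.inr ⟨i, hi, hpi⟩)⟩]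

section RootedTree

variable {V : Type*} {parent : V → V} {v w w' a b u : V}

theorem eq_of_mem_periodicPts {r : V} (hroot : parent r = r)
    (hreach : ∀ u : V, ∃ n : ℕ, parent^[n] u = r) (hu : u ∈ periodicPts parent) :
    u = r := by
  obtain ⟨k, hk, hper⟩ := mem_periodicPts.mp hu
  obtain ⟨n, hn⟩ := hreach u
  calc u = parent^[n * k] u := (hper.const_mul n).eq.symm
    _ = parent^[(n * k - n) + n] u := by rw [Nat.sub_add_cancel (Nat.le_mul_of_pos_right n hk)]
    _ = r := by rw [iterate_add_apply, hn, iterate_fixed hroot]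

theorem iterate_ne_of_parent_eq (hv : v ∉ periodicPts parent) (hw : parent w = v) (n : ℕ) :
    parent^[n] v ≠ w := fun h =>
  hv (mem_periodicPts.mpr ⟨n + 1, n.succ_pos, by
    rw [IsPeriodicPt, IsFixedPt, iterate_succ_apply', h, hw]⟩)

theorem child_eq_of_iterate_eq (hv : v ∉ periodicPts parent) (hw : parent w = v)
    (hw' : parent w' = v) {n m : ℕ} (hn : parent^[n] u = w) (hm : parent^[m] u = w') :
    w = w' := by
  wlog hnm : n ≤ m generalizing n m w w'
  · exact (this hw' hw hm hn (le_of_not_ge hnm)).symm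
  obtain ⟨d, rfl⟩ := Nat.exists_eq_add_of_le hnm
  rw [add_comm, iterate_add_apply, hn] at hm
  cases d with
  | zero => exact hm
  | succ d =>
    rw [iterate_succ_apply, hw] at hm
    exact absurd hm (iterate_ne_of_parent_eq hv hw' d)

theorem eq_of_star_of_iterate_eq (hv : v ∉ periodicPts parent) (hw : parent w = v)
    (hu : u = v ∨ parent u = v) {n : ℕ} (hn : parent^[n] u = w) : u = w := by
  rcases hu with rfl | hu
  · exact absurd hn (iterate_ne_of_parent_eq hv hw n)
  · exact child_eq_of_iterate_eq (n := 0) hv hu hw rfl hn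

theorem exists_iterate_eq_of_adjacent
    (hadj : parent b = a ∨ parent a = b ∨ parent a = parent b) {k : ℕ}
    (h : parent^[k + 1] a = u) : ∃ m, parent^[m] b = u := by
  rcases hadj with hab | hab | hab
  · exact ⟨k + 2, by rw [iterate_succ_apply, hab, h]⟩
  · exact ⟨k, by rw [← hab, ← iterate_succ_apply, h]⟩
  · exact ⟨k + 1, by rw [iterate_succ_apply, ← hab, ← iterate_succ_apply, h]⟩

theorem exists_child_of_iterate_add_two
    (hadj : parent b = a ∨ parent a = b ∨ parent a = parent b) {k : ℕ}
    (h : parent^[k + 2] a = v) :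
    ∃ w, parent w = v ∧ (∃ n, parent^[n] a = w) ∧ (∃ n, parent^[n] b = w) :=
  ⟨parent^[k + 1] a, by rwa [← iterate_succ_apply' parent], ⟨k + 1, rfl⟩,
    exists_iterate_eq_of_adjacent hadj rfl⟩

theorem subtree_iff_star_or_child_subtree
    (hadj : parent b = a ∨ parent a = b ∨ parent a = parent b) :
    ((∃ n, parent^[n] a = v) ∧ (∃ n, parent^[n] b = v)) ↔
      ((a = v ∨ parent a = v) ∧ (b = v ∨ parent b = v)) ∨
        ∃ w, parent w = v ∧ (∃ n, parent^[n] a = w) ∧ (∃ n, parent^[n] b = w) := by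
  have hadj' : parent a = b ∨ parent b = a ∨ parent b = parent a := by tauto
  constructor
  · rintro ⟨⟨n, ha⟩, ⟨m, hb⟩⟩
    match n, m, ha, hb with
    | k + 2, _, ha, _ => exact .inr (exists_child_of_iterate_add_two hadj ha)
    | _, k + 2, _, hb =>
      obtain ⟨w, hw, hbw, haw⟩ := exists_child_of_iterate_add_two hadj' hb
      exact .inr ⟨w, hw, haw, hbw⟩
    | 0, 0, ha, hb | 0, 1, ha, hb | 1, 0, ha, hb | 1, 1, ha, hb =>
      exact .inl ⟨by simp_all, by simp_all⟩
  · have of_star {x : V} : x = v ∨ parent x = v → ∃ n, parent^[n] x = v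
      | .inl h => ⟨0, h⟩
      | .inr h => ⟨1, h⟩
    have of_child_subtree {x w : V} (hw : parent w = v) :
        (∃ n, parent^[n] x = w) → ∃ n, parent^[n] x = v
      | ⟨n, h⟩ => ⟨n + 1, by rw [iterate_succ_apply', h, hw]⟩
    rintro (⟨ha, hb⟩ | ⟨w, hw, ha, hb⟩)
    exacts [⟨of_star ha, of_star hb⟩, ⟨of_child_subtree hw ha, of_child_subtree hw hb⟩]

end RootedTree

/-- A rooted tree is modeled by a parent map `parent` on the
vertex set `V`, with root `r` (a fixpoint of `parent`, reachable from every
vertex).  Every non-root vertex `u` is identified with the edge joining `u` to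
`parent u`.  For a non-root vertex `v`:
* the edges of `T_v` (the subtree at `v` together with the parent edge of `v`)
  are the edges `u` with `parent^[n] u = v` for some `n`;
* the edges of the star `S_v` are those incident to `v`, i.e. `u = v` or
  `parent u = v`;
* the children of `v` are the vertices `w` with `parent w = v`.

Paths are lists of edges, consecutive edges being distinct and adjacent.  Then
every traversal of `Ps` within `T_v` is within `S_v` or within `T_w` for some
child `w` of `v`, and the changeover cost within `T_v` is the changeover cost
within `S_v` plus the sum over the children `w` of the changeover costs within
`T_w`. -/
theorem changeover_subtree_decomposition
    {V X : Type*} [Fintype V] [DecidableEq V]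
    (parent : V → V) (r : V) (hroot : parent r = r)
    (hreach : ∀ u : V, ∃ n : ℕ, parent^[n] u = r)
    (χ : V → X) (c : X → X → ℝ)
    (Ps : Finset (List V))
    (hP : ∀ P ∈ Ps, (∀ e ∈ P, e ≠ r) ∧
      List.Chain' (fun e e' => e ≠ e' ∧
        (parent e' = e ∨ parent e = e' ∨ parent e = parent e')) P)
    (v : V) (hv : v ≠ r) :
    (∀ t ∈ Ps.biUnion (fun P => (P.zip P.tail).toFinset),
        ((∃ n, parent^[n] t.1 = v) ∧ (∃ n, parent^[n] t.2 = v)) →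
        (((t.1 = v ∨ parent t.1 = v) ∧ (t.2 = v ∨ parent t.2 = v)) ∨
          ∃ w, parent w = v ∧
            (∃ n, parent^[n] t.1 = w) ∧ (∃ n, parent^[n] t.2 = w))) ∧
    (∑ t ∈ (Ps.biUnion (fun P => (P.zip P.tail).toFinset)).filter
        (fun t => (∃ n, parent^[n] t.1 = v) ∧ (∃ n, parent^[n] t.2 = v)),
        c (χ t.1) (χ t.2))
      = (∑ t ∈ (Ps.biUnion (fun P => (P.zip P.tail).toFinset)).filter
            (fun t => (t.1 = v ∨ parent t.1 = v) ∧ (t.2 = v ∨ parent t.2 = v)),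
            c (χ t.1) (χ t.2))
        + ∑ w ∈ Finset.univ.filter (fun w => parent w = v),
            ∑ t ∈ (Ps.biUnion (fun P => (P.zip P.tail).toFinset)).filter
                (fun t => (∃ n, parent^[n] t.1 = w) ∧ (∃ n, parent^[n] t.2 = w)),
              c (χ t.1) (χ t.2) := by
  have hadj : ∀ t ∈ Ps.biUnion (fun P => (P.zip P.tail).toFinset), t.1 ≠ t.2 ∧
      (parent t.2 = t.1 ∨ parent t.1 = t.2 ∨ parent t.1 = parent t.2) := by
    intro t ht
    obtain ⟨P, hPs, htP⟩ := mem_biUnion.mp ht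
    exact (hP P hPs).2.rel_of_mem_zip_tail (List.mem_toFinset.mp htP)
  have hv' : v ∉ periodicPts parent := fun h => hv (eq_of_mem_periodicPts hroot hreach h)
  refine ⟨fun t ht => (subtree_iff_star_or_child_subtree (hadj t ht).2).1, ?_⟩
  refine sum_filter_eq_add_sum_filter_of_cover _ _ _ _ _ ?_ ?_ ?_ _
  · intro t ht
    simpa only [mem_filter, mem_univ, true_and] using
      subtree_iff_star_or_child_subtree (hadj t ht).2
  · rintro t ht w hw ⟨ha, hb⟩ ⟨⟨n, haw⟩, ⟨m, hbw⟩⟩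
    have hwv := (mem_filter.mp hw).2
    exact (hadj t ht).1 ((eq_of_star_of_iterate_eq hv' hwv ha haw).trans
      (eq_of_star_of_iterate_eq hv' hwv hb hbw).symm)
  · rintro t - w hw w' hw' ⟨⟨n, haw⟩, -⟩ ⟨⟨m, haw'⟩, -⟩
    exact child_eq_of_iterate_eq hv' (mem_filter.mp hw).2 (mem_filter.mp hw').2 haw haw'
end

section
/- Let G be a graph whose chromatic index is Δ(G)+1, with Δ(G) ≥ 2, let X = {1,...,Δ(G)+1}, let 𝒫 be the set of all distinct length-2 paths of G, and define c(i,i)=0, c(i,j)=1 for i≠j with i,j ≤ Δ(G), and c(i,j)=M otherwise (for i≠j). Then every proper edge coloring χ : E(G) → X satisfies co_χ(𝒫) ≥ |𝒫| + M − 1. -/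
/-!
Every length-2 path joins two distinct colors and so costs at least `1`. Some edge `e` colored
`Δ + 1` meets another edge: otherwise recoloring every such edge with color `1` would give a
proper coloring with `Δ` colors. The path through `e` and that edge costs `M`.
-/

open scoped Classical

/-- The traversal cost function of the chromatic-index reduction: colors are
`Fin (Δ+1)`; cost `0` on equal colors, `1` between distinct colors among the
first `Δ` colors, and `M` otherwise. -/
noncomputable def tcost (Δ : ℕ) (M : ℝ) (i j : Fin (Δ + 1)) : ℝ :=
  if i = j then 0 else if i.1 < Δ ∧ j.1 < Δ then 1 else M

lemma tcost_symm (Δ : ℕ) (M : ℝ) (i j : Fin (Δ + 1)) :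
    tcost Δ M i j = tcost Δ M j i := by
  unfold tcost
  by_cases h : i = j
  · simp [h]
  · simp [h, Ne.symm h, and_comm]

/-- The set of all distinct length-2 paths of `G`: unordered pairs of distinct
edges sharing a vertex. -/
noncomputable def twoPaths {V : Type*} [Fintype V] (G : SimpleGraph V) :
    Finset (Sym2 G.edgeSet) :=
  Finset.univ.filter fun s =>
    ¬ s.IsDiag ∧ ∃ v : V, ∀ e ∈ s, v ∈ (e : Sym2 V)

/-- The changeover cost of the set of all length-2 paths of `G` under the edge
coloring `χ` and the traversal costs `tcost Δ M`. -/
noncomputable def coTwo {V : Type*} [Fintype V] (G : SimpleGraph V)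
    (Δ : ℕ) (M : ℝ) (χ : G.edgeSet → Fin (Δ + 1)) : ℝ :=
  ∑ s ∈ twoPaths G,
    Sym2.lift ⟨fun e e' => tcost Δ M (χ e) (χ e'),
      fun e e' => tcost_symm Δ M (χ e) (χ e')⟩ s

/-- A proper edge coloring: distinct edges sharing a vertex get distinct colors. -/
def ProperEC {V Y : Type*} (G : SimpleGraph V) (χ : G.edgeSet → Y) : Prop :=
  ∀ e e' : G.edgeSet, e ≠ e' →
    (∃ v : V, v ∈ (e : Sym2 V) ∧ v ∈ (e' : Sym2 V)) → χ e ≠ χ e'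

open Finset

theorem Finset.add_card_sub_one_le_sum {ι : Type*} {s : Finset ι} {f : ι → ℝ} {a : ι}
    (ha : a ∈ s) (hf : ∀ x ∈ s, 1 ≤ f x) : f a + ((#s : ℝ) - 1) ≤ ∑ x ∈ s, f x := by
  have hrest : (#(s.erase a) : ℝ) ≤ ∑ x ∈ s.erase a, f x := by
    simpa using card_nsmul_le_sum (s.erase a) f 1 fun x hx => hf x (mem_of_mem_erase hx)
  rw [← add_sum_erase s f ha, card_erase_of_mem ha,
    Nat.cast_sub (card_pos.mpr ⟨a, ha⟩), Nat.cast_one] at *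
  linarith

section tcost

variable {Δ : ℕ} {M : ℝ} {i j : Fin (Δ + 1)}

lemma one_le_tcost (hM : 1 ≤ M) (hij : i ≠ j) : 1 ≤ tcost Δ M i j := by
  simp only [tcost, if_neg hij]
  split_ifs
  exacts [le_rfl, hM]

lemma tcost_last_left (hj : j ≠ Fin.last Δ) : tcost Δ M (Fin.last Δ) j = M := by
  simp [tcost, hj.symm]

end tcost

namespace SimpleGraph

variable {V : Type*} [Fintype V] {G : SimpleGraph V} {Δ : ℕ} {M : ℝ}

noncomputable def pathCost (G : SimpleGraph V) (Δ : ℕ) (M : ℝ) (χ : G.edgeSet → Fin (Δ + 1)) :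
    Sym2 G.edgeSet → ℝ :=
  Sym2.lift ⟨fun e e' => tcost Δ M (χ e) (χ e'), fun e e' => tcost_symm Δ M (χ e) (χ e')⟩

lemma coTwo_eq_sum_pathCost (χ : G.edgeSet → Fin (Δ + 1)) :
    coTwo G Δ M χ = ∑ s ∈ twoPaths G, pathCost G Δ M χ s :=
  rfl

lemma mk_mem_twoPaths {e e' : G.edgeSet} :
    s(e, e') ∈ twoPaths G ↔ e ≠ e' ∧ ∃ v : V, v ∈ (e : Sym2 V) ∧ v ∈ (e' : Sym2 V) := by
  simp only [twoPaths, mem_filter, mem_univ, true_and, Sym2.mk_isDiag_iff, Sym2.mem_iff,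
    forall_eq_or_imp, forall_eq]

lemma ProperEC.one_le_pathCost {χ : G.edgeSet → Fin (Δ + 1)} (hχ : ProperEC G χ) (hM : 1 ≤ M)
    {s : Sym2 G.edgeSet} (hs : s ∈ twoPaths G) : 1 ≤ pathCost G Δ M χ s := by
  induction s using Sym2.ind with
  | _ e e' =>
    obtain ⟨hne, hmeet⟩ := mk_mem_twoPaths.mp hs
    exact one_le_tcost hM (hχ e e' hne hmeet)

lemma ProperEC.exists_meet_of_color_last {χ : G.edgeSet → Fin (Δ + 1)} (hχ : ProperEC G χ)
    (hΔ : 0 < Δ) (hidx : ¬ ∃ χ₀ : G.edgeSet → Fin Δ, ProperEC G χ₀) :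
    ∃ e e' : G.edgeSet, χ e = Fin.last Δ ∧ e ≠ e' ∧
      ∃ v : V, v ∈ (e : Sym2 V) ∧ v ∈ (e' : Sym2 V) := by
  by_contra! hisolated
  refine hidx ⟨fun e => if h : χ e = Fin.last Δ then ⟨0, hΔ⟩ else (χ e).castPred h, ?_⟩
  intro e e' hne hmeet
  obtain ⟨v, hv, hv'⟩ := hmeet
  by_cases he : χ e = Fin.last Δ
  · exact (hisolated e e' he hne v hv hv').elim
  by_cases he' : χ e' = Fin.last Δ
  · exact (hisolated e' e he' hne.symm v hv' hv).elim
  simpa [he, he'] using hχ e e' hne ⟨v, hv, hv'⟩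

end SimpleGraph

open SimpleGraph in
theorem coTwo_lower_bound_of_chromaticIndex_succ_general
    {V : Type*} [Fintype V]
    (G : SimpleGraph V)
    (Δ : ℕ) (hΔ2 : 2 ≤ Δ) (M : ℝ) (hM : 1 ≤ M)
    (hidx : ¬ ∃ χ₀ : G.edgeSet → Fin Δ, ProperEC G χ₀)
    (χ : G.edgeSet → Fin (Δ + 1)) (hχ : ProperEC G χ) :
    ((twoPaths G).card : ℝ) + M - 1 ≤ coTwo G Δ M χ := by
  obtain ⟨e, e', he, hne, hmeet⟩ := hχ.exists_meet_of_color_last (by omega) hidx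
  have hpath : s(e, e') ∈ twoPaths G := mk_mem_twoPaths.mpr ⟨hne, hmeet⟩
  have hcost : pathCost G Δ M χ s(e, e') = M := by
    have he' : χ e' ≠ Fin.last Δ := he ▸ (hχ e e' hne hmeet).symm
    simp only [pathCost, Sym2.lift_mk, he, tcost_last_left he']
  have hsum := add_card_sub_one_le_sum hpath fun s hs => hχ.one_le_pathCost hM hs
  rw [coTwo_eq_sum_pathCost]
  linarith

/-- Let `G` be connected with maximum degree `Δ ≥ 2` and
chromatic index `Δ + 1` (no proper edge coloring with `Δ` colors exists), let
`Ps` be the set of all distinct length-2 paths of `G`, and let traversal costs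
be given by `tcost Δ M` (with `M ≥ 1`).  Then every proper edge coloring
`χ : E(G) → Fin (Δ+1)` satisfies `co_χ(Ps) ≥ |Ps| + M - 1`. -/
theorem coTwo_lower_bound_of_chromaticIndex_succ
    {V : Type*} [Fintype V] [DecidableEq V]
    (G : SimpleGraph V) [DecidableRel G.Adj] (hconn : G.Connected)
    (Δ : ℕ) (hΔ : Δ = G.maxDegree) (hΔ2 : 2 ≤ Δ) (M : ℝ) (hM : 1 ≤ M)
    (hidx : ¬ ∃ χ₀ : G.edgeSet → Fin Δ, ProperEC G χ₀)
    (χ : G.edgeSet → Fin (Δ + 1)) (hχ : ProperEC G χ) :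
    ((twoPaths G).card : ℝ) + M - 1 ≤ coTwo G Δ M χ :=
  coTwo_lower_bound_of_chromaticIndex_succ_general G Δ hΔ2 M hM hidx χ hχ
end

section
/- In the set cover reduction instance with colors X = X_c ⊔ X_e, cost 0 on equal colors, cost 1 between distinct colors of X_c, and cost 2 otherwise: for any spanning arborescence T rooted at r and proper edge coloring χ, co_χ(T, r) ≥ n + |𝒮_e|, where n = |U| and 𝒮_e is the set of parents S of U-elements in T whose inbound arc rS is colored with a color of X_e. -/
/-- Arcs of the set cover reduction graph: arcs `r → S i` (left) and
`S i → u` for `u ∈ S i` (right). -/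
abbrev Arc {ι U : Type*} (S : ι → Finset U) :=
  ι ⊕ {p : ι × U // p.2 ∈ S p.1}

/-- Source vertex of an arc (`none` is the root `r`). -/
def src {ι U : Type*} (S : ι → Finset U) : Arc S → Option (ι ⊕ U)
  | Sum.inl _ => none
  | Sum.inr p => some (Sum.inl p.1.1)

/-- Target vertex of an arc. -/
def tgt {ι U : Type*} (S : ι → Finset U) : Arc S → Option (ι ⊕ U)
  | Sum.inl i => some (Sum.inl i)
  | Sum.inr p => some (Sum.inr p.1.2)

/-- Traversal costs on colors `Xc ⊕ Xe`: `0` on equal colors, `1` between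
distinct colors of `Xc`, `2` otherwise. -/
noncomputable def scost {Xc Xe : Type*} [DecidableEq Xc] [DecidableEq Xe] :
    Xc ⊕ Xe → Xc ⊕ Xe → ℝ := fun x y =>
  if x = y then 0 else
    match x, y with
    | Sum.inl _, Sum.inl _ => 1
    | _, _ => 2

/-!
The paths from `r` to the set vertices are single arcs and contribute no traversals, so the
changeover cost is the sum, over the elements `u`, of the cost of the traversal at the parent
`S = pu u` from `rS` to `Su`. Both arcs meet at `S`, so a proper coloring gives them distinct
colors and this cost is at least `1`, and at least `2` when `χ(rS)` lies in `Xe`. Since every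
parent in `𝒮ₑ` has at least one child, the elements with `χ(rS) ∈ Xe` are at least `|𝒮ₑ|`.
-/

open Finset

lemma scost_ge_of_ne {Xc Xe : Type*} [DecidableEq Xc] [DecidableEq Xe] {x y : Xc ⊕ Xe}
    (h : x ≠ y) : (if x.isRight then 2 else 1 : ℝ) ≤ scost x y := by
  rcases x with x | x <;> rcases y with y | y <;> simp [scost, h]

lemma sum_ite_two_one {α : Type*} (s : Finset α) (p : α → Prop) [DecidablePred p] :
    ∑ a ∈ s, (if p a then 2 else 1 : ℝ) = #s + #(s.filter p) := by
  have hsplit : ∀ a, (if p a then 2 else 1 : ℝ) = 1 + if p a then 1 else 0 := fun a => by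
    split_ifs <;> norm_num
  simp only [hsplit, sum_add_distrib, sum_const, nsmul_eq_mul, mul_one, sum_boole]

lemma card_filter_range_le_card_filter_comp {α β : Type*} [Fintype α] [Fintype β]
    [DecidableEq β] (f : α → β) (p : β → Prop) [DecidablePred p] :
    #(univ.filter fun b => (∃ a, f a = b) ∧ p b) ≤ #(univ.filter fun a => p (f a)) :=
  card_le_card_of_surjOn f fun b hb => by
    simp only [coe_filter, mem_univ, true_and, Set.mem_ofPred_eq] at hb ⊢
    obtain ⟨⟨a, rfl⟩, hpb⟩ := hb
    exact ⟨a, hpb, rfl⟩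

lemma sum_pathTransitions {ι U M : Type*} [Fintype ι] [Fintype U] [DecidableEq ι]
    [DecidableEq U] [AddCommMonoid M] (S : ι → Finset U) (pu : U → ι)
    (hpu : ∀ u, u ∈ S (pu u)) (g : Arc S × Arc S → M) :
    ∑ t ∈ ((univ.image (fun i : ι => ([Sum.inl i] : List (Arc S)))) ∪
          (univ.image (fun u : U =>
            ([Sum.inl (pu u), Sum.inr ⟨(pu u, u), hpu u⟩] : List (Arc S))))).biUnion
          (fun P => (P.zip P.tail).toFinset), g t
      = ∑ u : U, g (Sum.inl (pu u), Sum.inr ⟨(pu u, u), hpu u⟩) := by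
  have htransitions : ((univ.image (fun i : ι => ([Sum.inl i] : List (Arc S)))) ∪
          (univ.image (fun u : U =>
            ([Sum.inl (pu u), Sum.inr ⟨(pu u, u), hpu u⟩] : List (Arc S))))).biUnion
          (fun P => (P.zip P.tail).toFinset)
      = univ.image fun u : U =>
          ((Sum.inl (pu u) : Arc S), (Sum.inr ⟨(pu u, u), hpu u⟩ : Arc S)) := by
    ext t
    simp only [mem_biUnion, mem_union, mem_image, mem_univ, true_and, List.mem_toFinset]
    constructor
    · rintro ⟨P, ⟨i, rfl⟩ | ⟨u, rfl⟩, ht⟩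
      · simp at ht
      · simp only [List.tail_cons, List.zip_cons_cons, List.zip_nil_right,
          List.mem_singleton] at ht
        exact ⟨u, ht.symm⟩
    · rintro ⟨u, rfl⟩
      exact ⟨_, Or.inr ⟨u, rfl⟩, by simp⟩
  rw [htransitions, sum_image]
  rintro u - v - huv
  simp only [Prod.mk.injEq, Sum.inr.injEq, Subtype.mk.injEq] at huv
  exact huv.2.2

/-- In the set cover reduction instance with colors
`X = Xc ⊕ Xe` and costs `scost`, for any spanning arborescence rooted at `r`
(parent assignment `pu` with `u ∈ S (pu u)`) and any proper arc coloring `χ`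
(arcs sharing a vertex get distinct colors), the changeover cost of the
root-to-vertex path system is at least `n + |𝒮ₑ|`, where `n = |U|` and `𝒮ₑ` is
the set of parents of elements whose inbound arc from `r` has a color of `Xe`. -/
theorem setcover_changeover_lower_bound
    {ι U Xc Xe : Type*} [Fintype ι] [Fintype U] [DecidableEq ι] [DecidableEq U]
    [DecidableEq Xc] [DecidableEq Xe]
    (S : ι → Finset U) (pu : U → ι) (hpu : ∀ u, u ∈ S (pu u))
    (χ : Arc S → Xc ⊕ Xe)
    (hproper : ∀ a b : Arc S, a ≠ b →
      (src S a = src S b ∨ src S a = tgt S b ∨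
        tgt S a = src S b ∨ tgt S a = tgt S b) → χ a ≠ χ b) :
    (Fintype.card U : ℝ) +
        ((Finset.univ.filter (fun i : ι =>
            (∃ u : U, pu u = i) ∧ (χ (Sum.inl i)).isRight)).card : ℝ)
      ≤ ∑ t ∈ ((Finset.univ.image (fun i : ι => ([Sum.inl i] : List (Arc S)))) ∪
            (Finset.univ.image (fun u : U =>
              ([Sum.inl (pu u), Sum.inr ⟨(pu u, u), hpu u⟩] : List (Arc S))))).biUnion
            (fun P => (P.zip P.tail).toFinset),
          scost (χ t.1) (χ t.2) := by
  have hparent_ne : ∀ u, χ (Sum.inl (pu u)) ≠ χ (Sum.inr ⟨(pu u, u), hpu u⟩) := fun u =>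
    hproper _ _ Sum.inl_ne_inr (by simp [src, tgt])
  rw [sum_pathTransitions]
  calc (Fintype.card U : ℝ) +
        #(univ.filter fun i : ι => (∃ u : U, pu u = i) ∧ (χ (Sum.inl i)).isRight)
      ≤ #(univ : Finset U) + #(univ.filter fun u : U => (χ (Sum.inl (pu u))).isRight) := by
        rw [card_univ]
        gcongr
        exact card_filter_range_le_card_filter_comp pu _
    _ = ∑ u : U, (if (χ (Sum.inl (pu u))).isRight then 2 else 1 : ℝ) :=
        (sum_ite_two_one _ _).symm
    _ ≤ _ := sum_le_sum fun u _ => scost_ge_of_ne (hparent_ne u)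
end

section
/- Let T be a spanning tree of a connected graph G and B a biconnected component (block) of G. Then the subgraph of T induced by the vertices of B is a spanning tree of B. -/
/-- A set of vertices `B` induces a biconnected subgraph: the induced subgraph
is connected and remains connected after deleting any one vertex of `B`. -/
def IsBiconnected {V : Type*} (G : SimpleGraph V) (B : Set V) : Prop :=
  (G.induce B).Connected ∧ ∀ v ∈ B, (G.induce (B \ {v})).Connected

/-- A block (biconnected component) of `G`: a maximal biconnected set of
vertices. -/
def IsBlock {V : Type*} (G : SimpleGraph V) (B : Set V) : Prop :=
  IsBiconnected G B ∧ ∀ B' : Set V, B ⊆ B' → IsBiconnected G B' → B' = B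

/-! A path of `T` between two vertices of a block `B` of `G` is a path of `G`, and gluing it
to `B` keeps `B` biconnected: deleting a vertex `x` leaves every path vertex joined to `B \ {x}`
along the part of the path before it or the part after it, one of which avoids `x`. By
maximality the path lies in `B`, so `T[B]` is connected; it is acyclic as a subgraph of `T`. -/

section

open SimpleGraph

variable {V : Type*} {G : SimpleGraph V}

lemma SimpleGraph.Walk.IsPath.notMem_support_takeUntil_or_dropUntil [DecidableEq V]
    {u v a x : V} {p : G.Walk u v} (hp : p.IsPath) (ha : a ∈ p.support) (hxa : x ≠ a) :
    x ∉ (p.takeUntil a ha).support ∨ x ∉ (p.dropUntil a ha).support := by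
  by_contra! hx
  have hsplit : ((p.takeUntil a ha).append (p.dropUntil a ha)).IsPath := by
    rwa [p.take_spec ha]
  exact hsplit.ne_of_mem_support_of_append hxa hx.1 hx.2 rfl

lemma SimpleGraph.Walk.IsPath.exists_walk_to_endpoint_avoiding {u v a x : V}
    {p : G.Walk u v} (hp : p.IsPath) (ha : a ∈ p.support) (hxa : x ≠ a) :
    ∃ e ∈ ({u, v} : Set V), ∃ q : G.Walk e a,
      x ∉ q.support ∧ ∀ w ∈ q.support, w ∈ p.support := by
  classical
  rcases hp.notMem_support_takeUntil_or_dropUntil ha hxa with hx | hx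
  · exact ⟨u, Or.inl rfl, p.takeUntil a ha, hx,
      fun w hw => p.support_takeUntil_subset_support ha hw⟩
  · refine ⟨v, Or.inr rfl, (p.dropUntil a ha).reverse, by simpa using hx, fun w hw => ?_⟩
    exact p.support_dropUntil_subset_support ha (by simpa using hw)

lemma IsBiconnected.connected_induce_diff_singleton {B : Set V} (hB : IsBiconnected G B)
    (x : V) : (G.induce (B \ {x})).Connected := by
  by_cases hx : x ∈ B
  · exact hB.2 x hx
  · rw [Set.sdiff_singleton_eq_self hx]
    exact hB.1

lemma IsBiconnected.union_support {B : Set V} (hB : IsBiconnected G B) {u v : V}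
    (hu : u ∈ B) (hv : v ∈ B) {p : G.Walk u v} (hp : p.IsPath) :
    IsBiconnected G (B ∪ {w | w ∈ p.support}) := by
  refine ⟨induce_union_connected hB.1.preconnected p.connected_induce_support.preconnected
    ⟨u, hu, p.start_mem_support⟩, fun x _ => ?_⟩
  have hBx := hB.connected_induce_diff_singleton x
  obtain ⟨⟨b, hb⟩⟩ := hBx.nonempty
  have hBx_sub : B \ {x} ⊆ (B ∪ {w | w ∈ p.support}) \ {x} :=
    Set.sdiff_subset_sdiff_left Set.subset_union_left
  refine induce_connected_of_patches b (hBx_sub hb) fun {a} ha => ?_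
  rcases ha with ⟨haB | hap, hax⟩
  · exact ⟨B \ {x}, hBx_sub, hb, ⟨haB, hax⟩, hBx.preconnected _ _⟩
  obtain ⟨e, he, q, hxq, hqp⟩ := hp.exists_walk_to_endpoint_avoiding hap (Ne.symm hax)
  have heB : e ∈ B \ {x} := by
    refine ⟨by rcases he with rfl | rfl <;> assumption, fun hex => hxq ?_⟩
    exact hex ▸ q.start_mem_support
  refine ⟨B \ {x} ∪ {w | w ∈ q.support}, ?_, Or.inl hb, Or.inr q.end_mem_support,
    (induce_union_connected hBx.preconnected q.connected_induce_support.preconnected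
      ⟨e, heB, q.start_mem_support⟩).preconnected _ _⟩
  rintro w (hw | hw)
  · exact hBx_sub hw
  · exact ⟨Or.inr (hqp w hw), fun hwx => hxq (hwx ▸ hw)⟩

lemma IsBlock.support_subset_of_isPath {B : Set V} (hB : IsBlock G B) {u v : V}
    (hu : u ∈ B) (hv : v ∈ B) {p : G.Walk u v} (hp : p.IsPath) :
    ∀ w ∈ p.support, w ∈ B := by
  intro w hw
  rw [← hB.2 _ Set.subset_union_left (hB.1.union_support hu hv hp)]
  exact Or.inr hw

lemma IsBlock.preconnected_induce_of_le {B : Set V} (hB : IsBlock G B) {H : SimpleGraph V}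
    (hHG : H ≤ G) (hH : H.Preconnected) : (H.induce B).Preconnected := by
  classical
  rintro ⟨a, ha⟩ ⟨b, hb⟩
  let p := (hH a b).some.toPath
  have hsupp : ∀ w ∈ (p : H.Walk a b).support, w ∈ B := by
    simpa only [Walk.support_mapLe_eq_support] using
      hB.support_subset_of_isPath ha hb (p.2.mapLe hHG)
  exact ((p : H.Walk a b).induce B hsupp).reachable

end

theorem induced_spanning_tree_of_block_general
    {V : Type*} (G : SimpleGraph V)
    (T : SimpleGraph V) (hTG : T ≤ G) (hT : T.IsTree)
    (B : Set V) (hB : IsBlock G B) :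
    (T.induce B) ≤ (G.induce B) ∧ (T.induce B).IsTree := by
  have hconn : (T.induce B).Connected := by
    have : Nonempty B := hB.1.1.nonempty
    exact ⟨hB.preconnected_induce_of_le hTG hT.1.preconnected⟩
  exact ⟨fun _ _ h => hTG h, hconn, hT.2.induce B⟩

/-- If `T` is a spanning tree of a connected graph `G` and
`B` is a block of `G`, then the subgraph of `T` induced on the vertices of `B`
is a spanning tree of the subgraph of `G` induced on `B` (it is a subgraph of
`G.induce B` on all of `B`, and it is a tree). -/
theorem induced_spanning_tree_of_block
    {V : Type*} [Fintype V] (G : SimpleGraph V) (hG : G.Connected)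
    (T : SimpleGraph V) (hTG : T ≤ G) (hT : T.IsTree)
    (B : Set V) (hB : IsBlock G B) :
    (T.induce B) ≤ (G.induce B) ∧ (T.induce B).IsTree :=
  induced_spanning_tree_of_block_general G T hTG hT B hB
end
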